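/- arXiv:1309.2393 — 6 statements merged into one kernel-verified Lean document; each statement's English description precedes it below -/
import Mathlib

section
/- Let X be a nonempty set, H a Hermitian kernel on X and L a positive semidefinite kernel on X. Then the following are equivalent: (1) |[f,f]_H| ≤ [f,f]_L for every finitely supported f : X → ℂ; (2) |[f,g]_H|² ≤ [f,f]_L · [g,g]_L for all finitely supported f, g : X → ℂ. -/
/-!
For sesquilinear forms `B` (Hermitian) and `C`, polarization with `x ± y` and the
parallelogram law for `C` turn the diagonal bound `|B(z,z)| ≤ Re C(z,z)` into
`2 Re B(x,y) ≤ Re C(x,x) + Re C(y,y)`. Replacing `x` by `t B(x,y) • x` for real `t` gives a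
quadratic inequality in `t` valid for every `t`, whose discriminant condition is
`|B(x,y)|² ≤ Re C(x,x) Re C(y,y)`. The pairings `[f,g]_K` are such sesquilinear forms on
`X →₀ ℂ`.
-/

open scoped ComplexOrder

/-- The inner product `[f,g]_K = ∑_{x,y} K(x,y) f(y) conj(g(x))` associated to a kernel `K`,
for finitely supported `f, g : X → ℂ`. -/
noncomputable def kerIP {X : Type*} (K : X → X → ℂ) (f g : X →₀ ℂ) : ℂ :=
  ∑ x ∈ g.support, ∑ y ∈ f.support, K x y * f y * (starRingEnd ℂ) (g x)

/-- A kernel is positive semidefinite if `[f,f]_K` is real and nonnegative for all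
finitely supported `f`. -/
def IsPSDKernel {X : Type*} (K : X → X → ℂ) : Prop := ∀ f : X →₀ ℂ, 0 ≤ kerIP K f f

/-- A kernel is Hermitian if `K(x,y) = conj (K(y,x))`. -/
def IsHermitianKernel {X : Type*} (K : X → X → ℂ) : Prop :=
  ∀ x y, K x y = (starRingEnd ℂ) (K y x)

namespace LinearMap

variable {M : Type*} [AddCommGroup M] [Module ℂ M]

theorem re_apply_add_add_re_apply_sub (C : M →ₗ⋆[ℂ] M →ₗ[ℂ] ℂ) (x y : M) :
    (C (x + y) (x + y)).re + (C (x - y) (x - y)).re = 2 * (C x x).re + 2 * (C y y).re := by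
  simp only [map_add, map_sub, add_apply, sub_apply, Complex.add_re, Complex.sub_re]
  ring

theorem re_apply_smul_smul (C : M →ₗ⋆[ℂ] M →ₗ[ℂ] ℂ) (c : ℂ) (x : M) :
    (C (c • x) (c • x)).re = ‖c‖ ^ 2 * (C x x).re := by
  rw [map_smulₛₗ₂, map_smul, smul_eq_mul, smul_eq_mul, ← mul_assoc, Complex.conj_mul',
    ← Complex.ofReal_pow, Complex.re_ofReal_mul]

variable {B C : M →ₗ⋆[ℂ] M →ₗ[ℂ] ℂ}

theorem IsSymm.four_mul_re_apply (hB : B.IsSymm) (x y : M) :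
    4 * (B x y).re = (B (x + y) (x + y)).re - (B (x - y) (x - y)).re := by
  simp only [map_add, map_sub, add_apply, sub_apply, Complex.add_re, Complex.sub_re,
    ← hB.eq x y, Complex.conj_re]
  ring

theorem IsSymm.two_mul_re_apply_le (hB : B.IsSymm) (hBC : ∀ x, ‖B x x‖ ≤ (C x x).re)
    (x y : M) : 2 * (B x y).re ≤ (C x x).re + (C y y).re := by
  have hadd := (Complex.re_le_norm _).trans (hBC (x + y))
  have hsub := ((neg_le_abs _).trans (Complex.abs_re_le_norm _)).trans (hBC (x - y))
  linarith [hB.four_mul_re_apply x y, C.re_apply_add_add_re_apply_sub x y]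

theorem IsSymm.sq_norm_apply_le (hB : B.IsSymm) (hC : ∀ x, 0 ≤ (C x x).re)
    (hBC : ∀ x, ‖B x x‖ ≤ (C x x).re) (x y : M) :
    ‖B x y‖ ^ 2 ≤ (C x x).re * (C y y).re := by
  set N := ‖B x y‖ ^ 2
  have hquad : ∀ t : ℝ, 0 ≤ (N * (C x x).re) * (t * t) + (-2 * N) * t + (C y y).re := by
    intro t
    have h := hB.two_mul_re_apply_le hBC ((t * B x y : ℂ) • x) y
    rw [C.re_apply_smul_smul, map_smulₛₗ₂, smul_eq_mul, map_mul, Complex.conj_ofReal, mul_assoc,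
      Complex.conj_mul', ← Complex.ofReal_pow, ← Complex.ofReal_mul, Complex.ofReal_re, norm_mul,
      Complex.norm_real, Real.norm_eq_abs, mul_pow, sq_abs] at h
    linarith
  have hdisc := discrim_le_zero hquad
  rw [discrim] at hdisc
  rcases (sq_nonneg _ : 0 ≤ N).eq_or_lt with hN | hN
  · exact hN.symm.trans_le (mul_nonneg (hC x) (hC y))
  · nlinarith

end LinearMap

section Kernel

open Finset

variable {X : Type*} (K : X → X → ℂ)

theorem kerIP_eq_sum_of_subset {f g : X →₀ ℂ} {s t : Finset X} (hf : f.support ⊆ s)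
    (hg : g.support ⊆ t) :
    kerIP K f g = ∑ x ∈ t, ∑ y ∈ s, K x y * f y * starRingEnd ℂ (g x) := by
  refine sum_subset hg (fun x _ hx => by simp [Finsupp.notMem_support_iff.mp hx])
    |>.trans (sum_congr rfl fun x _ => ?_)
  exact sum_subset hf fun y _ hy => by simp [Finsupp.notMem_support_iff.mp hy]

theorem kerIP_add_left (f₁ f₂ g : X →₀ ℂ) :
    kerIP K (f₁ + f₂) g = kerIP K f₁ g + kerIP K f₂ g := by
  classical
  rw [kerIP_eq_sum_of_subset K Finsupp.support_add subset_rfl,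
    kerIP_eq_sum_of_subset K (subset_union_left (s₂ := f₂.support)) subset_rfl,
    kerIP_eq_sum_of_subset K (subset_union_right (s₁ := f₁.support)) subset_rfl]
  simp only [Finsupp.coe_add, Pi.add_apply, mul_add, add_mul, sum_add_distrib]

theorem kerIP_add_right (f g₁ g₂ : X →₀ ℂ) :
    kerIP K f (g₁ + g₂) = kerIP K f g₁ + kerIP K f g₂ := by
  classical
  rw [kerIP_eq_sum_of_subset K subset_rfl Finsupp.support_add,
    kerIP_eq_sum_of_subset K subset_rfl (subset_union_left (s₂ := g₂.support)),
    kerIP_eq_sum_of_subset K subset_rfl (subset_union_right (s₁ := g₁.support))]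
  simp only [Finsupp.coe_add, Pi.add_apply, map_add, mul_add, sum_add_distrib]

theorem kerIP_smul_left (c : ℂ) (f g : X →₀ ℂ) :
    kerIP K (c • f) g = c * kerIP K f g := by
  rw [kerIP_eq_sum_of_subset K Finsupp.support_smul subset_rfl, kerIP, mul_sum]
  simp only [Finsupp.coe_smul, Pi.smul_apply, smul_eq_mul, mul_sum]
  congr! 2; ring

theorem kerIP_smul_right (c : ℂ) (f g : X →₀ ℂ) :
    kerIP K f (c • g) = starRingEnd ℂ c * kerIP K f g := by
  rw [kerIP_eq_sum_of_subset K subset_rfl Finsupp.support_smul, kerIP, mul_sum]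
  simp only [Finsupp.coe_smul, Pi.smul_apply, smul_eq_mul, map_mul, mul_sum]
  congr! 2; ring

/-- `kerIP K` as a sesquilinear form in Mathlib's convention (conjugate-linear in the first
argument), so `kerForm K g f = kerIP K f g`. -/
noncomputable def kerForm : (X →₀ ℂ) →ₗ⋆[ℂ] (X →₀ ℂ) →ₗ[ℂ] ℂ :=
  LinearMap.mk₂'ₛₗ (starRingEnd ℂ) (RingHom.id ℂ) (fun g f => kerIP K f g)
    (fun g₁ g₂ f => kerIP_add_right K f g₁ g₂)
    (fun c g f => kerIP_smul_right K c f g) (fun g f₁ f₂ => kerIP_add_left K f₁ f₂ g)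
    (fun c g f => kerIP_smul_left K c f g)

variable {K}

theorem isSymm_kerForm (hK : IsHermitianKernel K) : (kerForm K).IsSymm := by
  refine LinearMap.isSymm_def.2 fun g f => ?_
  change starRingEnd ℂ (kerIP K f g) = kerIP K g f
  rw [kerIP, kerIP, map_sum, sum_comm]
  refine sum_congr rfl fun y _ => ?_
  rw [map_sum]
  refine sum_congr rfl fun x _ => ?_
  rw [map_mul, map_mul, Complex.conj_conj, ← hK x y]
  ring

theorem IsPSDKernel.re_kerIP_nonneg (hK : IsPSDKernel K) (f : X →₀ ℂ) : 0 ≤ (kerIP K f f).re :=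
  (Complex.nonneg_iff.1 (hK f)).1

end Kernel

theorem stmt0_general {X : Type*} (H L : X → X → ℂ)
    (hH : IsHermitianKernel H) (hL : IsPSDKernel L) :
    (∀ f : X →₀ ℂ, ‖kerIP H f f‖ ≤ (kerIP L f f).re) ↔
      (∀ f g : X →₀ ℂ,
        ‖kerIP H f g‖ ^ 2 ≤ (kerIP L f f).re * (kerIP L g g).re) := by
  constructor
  · intro hHL f g
    rw [mul_comm]
    exact (isSymm_kerForm hH).sq_norm_apply_le (C := kerForm L) hL.re_kerIP_nonneg hHL g f
  · intro hHL f
    exact le_of_sq_le_sq ((hHL f f).trans_eq (sq _).symm) (hL.re_kerIP_nonneg f)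

/-- For a Hermitian kernel `H` and a positive semidefinite kernel `L` on a
nonempty set `X`, one has `|[f,f]_H| ≤ [f,f]_L` for all finitely supported `f` if and only if
`|[f,g]_H|² ≤ [f,f]_L ⬝ [g,g]_L` for all finitely supported `f, g`. -/
theorem stmt0 {X : Type*} [Nonempty X] (H L : X → X → ℂ)
    (hH : IsHermitianKernel H) (hL : IsPSDKernel L) :
    (∀ f : X →₀ ℂ, ‖kerIP H f f‖ ≤ (kerIP L f f).re) ↔
      (∀ f g : X →₀ ℂ,
        ‖kerIP H f g‖ ^ 2 ≤ (kerIP L f f).re * (kerIP L g g).re) :=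
  stmt0_general H L hH hL
end

section
/- Let X be a nonempty set, H a Hermitian kernel on X, 𝓚 a complex Hilbert space, J a fundamental symmetry on 𝓚, and v : X → 𝓚 a map such that H(x,y) = ⟨J v(y), v(x)⟩_𝓚 for all x, y ∈ X. Then the kernel L on X defined by L(x,y) = ⟨v(y), v(x)⟩_𝓚 is positive semidefinite and both L − H and L + H are positive semidefinite. -/
/-!
With `w = ∑ f(x) v(x)`, the form `[f,f]` of the kernel `⟪v x, A (v y)⟫` equals `⟪w, A w⟫`, so a
positive operator `A` yields a positive semidefinite kernel. The kernels `L`, `L - H`, `L + H`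
come from `A = 1, 1 - J, 1 + J`, and `1 ± J` is positive because `J² = 1` gives
`(1 ± J)² = 2 (1 ± J)`, i.e. `1 ± J = ½ (1 ± J)† (1 ± J)`.
-/

open scoped ComplexOrder

open scoped InnerProductSpace

open ContinuousLinearMap Finsupp

section

variable {X E : Type*} [NormedAddCommGroup E] [InnerProductSpace ℂ E]

lemma kerIP_inner_apply (A : E →L[ℂ] E) (v : X → E) (f g : X →₀ ℂ) :
    kerIP (fun x y => ⟪v x, A (v y)⟫_ℂ) f g
      = ⟪linearCombination ℂ v g, A (linearCombination ℂ v f)⟫_ℂ := by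
  simp only [kerIP, linearCombination_apply, Finsupp.sum, map_sum, map_smul, sum_inner,
    inner_sum, inner_smul_left, inner_smul_right, Finset.mul_sum]
  rw [Finset.sum_comm]
  exact Finset.sum_congr rfl fun _ _ => Finset.sum_congr rfl fun _ _ => by ring

lemma ContinuousLinearMap.IsPositive.isPSDKernel_inner {A : E →L[ℂ] E} (hA : A.IsPositive)
    (v : X → E) : IsPSDKernel fun x y => ⟪v x, A (v y)⟫_ℂ := fun f => by
  rw [kerIP_inner_apply]
  exact hA.inner_nonneg_right _

lemma isPositive_one_add_of_involution [CompleteSpace E] {J : E →L[ℂ] E}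
    (hJ : IsSelfAdjoint J) (hJJ : J * J = 1) : (1 + J).IsPositive := by
  have hsq : (1 + J) * (1 + J) = (2 : ℂ) • (1 + J) := by
    simp only [mul_add, add_mul, one_mul, mul_one, hJJ, two_smul]
    abel
  have hfactor : 1 + J = (2 : ℂ)⁻¹ • (adjoint (1 + J) ∘L (1 + J)) := by
    rw [((IsSelfAdjoint.one _).add hJ).adjoint_eq, ← mul_def, hsq, smul_smul,
      inv_mul_cancel₀ two_ne_zero, one_smul]
  rw [hfactor]
  exact (isPositive_adjoint_comp_self _).smul_of_nonneg (inv_nonneg.mpr zero_le_two)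

end

theorem stmt3_general {X : Type*} {𝓚 : Type*} [NormedAddCommGroup 𝓚]
    [InnerProductSpace ℂ 𝓚] [CompleteSpace 𝓚]
    (H : X → X → ℂ)
    (J : 𝓚 →L[ℂ] 𝓚) (hJsa : IsSelfAdjoint J)
    (hJsq : J ∘L J = ContinuousLinearMap.id ℂ 𝓚)
    (v : X → 𝓚) (hrep : ∀ x y, H x y = (inner ℂ (v x) (J (v y)) : ℂ)) :
    IsPSDKernel (fun x y => (inner ℂ (v x) (v y) : ℂ)) ∧
    IsPSDKernel (fun x y => (inner ℂ (v x) (v y) : ℂ) - H x y) ∧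
    IsPSDKernel (fun x y => (inner ℂ (v x) (v y) : ℂ) + H x y) := by
  have hJJ : J * J = 1 := hJsq
  have hplus := (isPositive_one_add_of_involution hJsa hJJ).isPSDKernel_inner v
  have hminus :=
    (isPositive_one_add_of_involution hJsa.neg (by simpa using hJJ)).isPSDKernel_inner v
  refine ⟨by simpa using isPositive_one.isPSDKernel_inner v, ?_, ?_⟩
  · simpa [hrep, inner_add_right, ← sub_eq_add_neg] using hminus
  · simpa [hrep, inner_add_right] using hplus

/-- If `(𝓚, J, v)` is a linearisation of the Hermitian kernel `H`,
i.e. `H(x,y) = ⟨J v(y), v(x)⟩` (in Mathlib's convention `inner (v x) (J (v y))`), then the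
kernel `L(x,y) = ⟨v(y), v(x)⟩ = inner (v x) (v y)` is positive semidefinite and both
`L − H` and `L + H` are positive semidefinite. -/
theorem stmt3 {X : Type*} [Nonempty X] {𝓚 : Type*} [NormedAddCommGroup 𝓚]
    [InnerProductSpace ℂ 𝓚] [CompleteSpace 𝓚]
    (H : X → X → ℂ) (hH : IsHermitianKernel H)
    (J : 𝓚 →L[ℂ] 𝓚) (hJsa : IsSelfAdjoint J)
    (hJsq : J ∘L J = ContinuousLinearMap.id ℂ 𝓚)
    (v : X → 𝓚) (hrep : ∀ x y, H x y = (inner ℂ (v x) (J (v y)) : ℂ)) :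
    IsPSDKernel (fun x y => (inner ℂ (v x) (v y) : ℂ)) ∧
    IsPSDKernel (fun x y => (inner ℂ (v x) (v y) : ℂ) - H x y) ∧
    IsPSDKernel (fun x y => (inner ℂ (v x) (v y) : ℂ) + H x y) :=
  stmt3_general H J hJsa hJsq v hrep
end

section
/- Let X be a nonempty set, K a Hermitian kernel on X, and let (𝓚, J, v) be a minimal linearisation of K. Define Φ : 𝓚 → (X → ℂ) by Φ(k)(x) = ⟨J k, v(x)⟩_𝓚. Then: (a) Φ is an injective linear map; (b) for every y ∈ X, Φ(v(y)) is the function x ↦ K(x,y), so (𝓚, J, Φ) is a reproducing kernel Kreĭn space on X with reproducing kernel K; (c) if (𝓚₁, J₁, v₁) and (𝓚₂, J₂, v₂) are unitarily equivalent minimal linearisations of K via the unitary Φ₀ : 𝓚₁ → 𝓚₂, then the associated maps satisfy Φ₂ ∘ Φ₀ = Φ₁, so the two reproducing kernel Kreĭn spaces have the same range of functions and the same transported inner products. -/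
/-!
If `⟨J k, v x⟩ = 0` for all `x`, then `J k` is orthogonal to the dense span of `v`, so `J k = 0`
and `k = J (J k) = 0`: this makes `Φ` injective. A unitary `Φ₀` with `Φ₀ ∘ v₁ = v₂` gives
`⟨J₂ Φ₀ k, v₂ x⟩ = ⟨J₂ Φ₀ k, Φ₀ v₁ x⟩ = ⟨J₁ k, v₁ x⟩`, i.e. `Φ₂ ∘ Φ₀ = Φ₁`; everything in (c)
follows from this identity together with the surjectivity of `Φ₀` and the injectivity of `Φ₂`.
-/

open scoped ComplexOrder

open scoped InnerProductSpace

section ReproducingMap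

variable {𝕜 E E' X : Type*} [RCLike 𝕜] [NormedAddCommGroup E] [InnerProductSpace 𝕜 E]
  [NormedAddCommGroup E'] [InnerProductSpace 𝕜 E']

theorem eq_zero_of_forall_inner_eq_zero_of_dense_span {v : X → E}
    (hv : Dense (Submodule.span 𝕜 (Set.range v) : Set E)) {w : E} (h : ∀ x, ⟪v x, w⟫_𝕜 = 0) :
    w = 0 := by
  have hspan : Submodule.span 𝕜 (Set.range v) ≤ (𝕜 ∙ w)ᗮ :=
    Submodule.span_le.mpr <| Set.range_subset_iff.mpr fun x =>
      Submodule.mem_orthogonal_singleton_iff_inner_left.mpr (h x)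
  exact hv.eq_zero_of_inner_right 𝕜 fun u hu =>
    Submodule.mem_orthogonal_singleton_iff_inner_left.mp (hspan hu)

/-- The map `Φ` of a linearisation `(E, J, v)`: `Φ k x = ⟨J k, v x⟩` in the paper's convention,
which is linear in the first slot. -/
def reproducingMap (J : E →L[𝕜] E) (v : X → E) : E →ₗ[𝕜] (X → 𝕜) :=
  LinearMap.pi fun x => innerₛₗ 𝕜 (v x) ∘ₗ (J : E →ₗ[𝕜] E)

@[simp]
theorem reproducingMap_apply (J : E →L[𝕜] E) (v : X → E) (k : E) (x : X) :
    reproducingMap J v k x = ⟪v x, J k⟫_𝕜 :=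
  rfl

theorem reproducingMap_injective {J : E →L[𝕜] E} (hJ : Function.Injective J) {v : X → E}
    (hv : Dense (Submodule.span 𝕜 (Set.range v) : Set E)) :
    Function.Injective (reproducingMap J v) := by
  refine (injective_iff_map_eq_zero _).mpr fun k hk => hJ ?_
  rw [map_zero]
  exact eq_zero_of_forall_inner_eq_zero_of_dense_span hv fun x => congrFun hk x

variable {J₁ : E →L[𝕜] E} {J₂ : E' →L[𝕜] E'} {v₁ : X → E} {v₂ : X → E'} {Φ₀ : E → E'}

theorem reproducingMap_comp_of_isometry (hΦ₀iso : ∀ u w, ⟪Φ₀ w, J₂ (Φ₀ u)⟫_𝕜 = ⟪w, J₁ u⟫_𝕜)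
    (hΦ₀v : ∀ x, Φ₀ (v₁ x) = v₂ x) :
    reproducingMap J₂ v₂ ∘ Φ₀ = reproducingMap J₁ v₁ := by
  funext k x
  simp only [Function.comp_apply, reproducingMap_apply, ← hΦ₀v x, hΦ₀iso]

theorem inner_eq_of_reproducingMap_eq (hΦ₀iso : ∀ u w, ⟪Φ₀ w, J₂ (Φ₀ u)⟫_𝕜 = ⟪w, J₁ u⟫_𝕜)
    (hΦ₀v : ∀ x, Φ₀ (v₁ x) = v₂ x) (hinj₂ : Function.Injective (reproducingMap J₂ v₂))
    {u w : E} {u' w' : E'} (hu : reproducingMap J₁ v₁ u = reproducingMap J₂ v₂ u')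
    (hw : reproducingMap J₁ v₁ w = reproducingMap J₂ v₂ w') :
    ⟪w, J₁ u⟫_𝕜 = ⟪w', J₂ u'⟫_𝕜 := by
  have hcomp := congrFun (reproducingMap_comp_of_isometry hΦ₀iso hΦ₀v)
  obtain rfl : Φ₀ u = u' := hinj₂ ((hcomp u).trans hu)
  obtain rfl : Φ₀ w = w' := hinj₂ ((hcomp w).trans hw)
  exact (hΦ₀iso u w).symm

end ReproducingMap

theorem stmt4_general {X : Type*} (K : X → X → ℂ)
    {𝓚₁ 𝓚₂ : Type*} [NormedAddCommGroup 𝓚₁] [InnerProductSpace ℂ 𝓚₁]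
    [NormedAddCommGroup 𝓚₂] [InnerProductSpace ℂ 𝓚₂]
    (J₁ : 𝓚₁ →L[ℂ] 𝓚₁) (J₂ : 𝓚₂ →L[ℂ] 𝓚₂)
    (hJ₁sq : J₁ ∘L J₁ = ContinuousLinearMap.id ℂ 𝓚₁)
    (hJ₂sq : J₂ ∘L J₂ = ContinuousLinearMap.id ℂ 𝓚₂)
    (v₁ : X → 𝓚₁) (v₂ : X → 𝓚₂)
    (hrep₁ : ∀ x y, K x y = (inner ℂ (v₁ x) (J₁ (v₁ y)) : ℂ))
    (hrep₂ : ∀ x y, K x y = (inner ℂ (v₂ x) (J₂ (v₂ y)) : ℂ))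
    (hmin₁ : Dense (Submodule.span ℂ (Set.range v₁) : Set 𝓚₁))
    (hmin₂ : Dense (Submodule.span ℂ (Set.range v₂) : Set 𝓚₂))
    (Φ₀ : 𝓚₁ →L[ℂ] 𝓚₂) (hΦ₀bij : Function.Bijective Φ₀)
    (hΦ₀iso : ∀ u w : 𝓚₁, (inner ℂ (Φ₀ w) (J₂ (Φ₀ u)) : ℂ) = inner ℂ w (J₁ u))
    (hΦ₀v : ∀ x, Φ₀ (v₁ x) = v₂ x) :
    -- (a), (b): `Φ₁` is an injective linear map and `Φ₁ (v₁ y) = K(·,y)`,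
    -- so `(𝓚₁, J₁, Φ₁)` is a reproducing kernel Kreĭn space with reproducing kernel `K`
    (∃ Φ : 𝓚₁ →ₗ[ℂ] (X → ℂ),
      (∀ k x, Φ k x = (inner ℂ (v₁ x) (J₁ k) : ℂ)) ∧ Function.Injective Φ ∧
      ∀ y, Φ (v₁ y) = fun x => K x y) ∧
    (∃ Φ : 𝓚₂ →ₗ[ℂ] (X → ℂ),
      (∀ k x, Φ k x = (inner ℂ (v₂ x) (J₂ k) : ℂ)) ∧ Function.Injective Φ ∧
      ∀ y, Φ (v₂ y) = fun x => K x y) ∧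
    -- (c): `Φ₂ ∘ Φ₀ = Φ₁`
    ((fun k : 𝓚₁ => fun x => (inner ℂ (v₂ x) (J₂ (Φ₀ k)) : ℂ)) =
      (fun k : 𝓚₁ => fun x => (inner ℂ (v₁ x) (J₁ k) : ℂ))) ∧
    -- same range of functions
    (Set.range (fun k : 𝓚₁ => fun x => (inner ℂ (v₁ x) (J₁ k) : ℂ)) =
      Set.range (fun k : 𝓚₂ => fun x => (inner ℂ (v₂ x) (J₂ k) : ℂ))) ∧
    -- same transported indefinite inner products
    (∀ (u w : 𝓚₁) (u' w' : 𝓚₂),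
      (fun x => (inner ℂ (v₁ x) (J₁ u) : ℂ)) = (fun x => (inner ℂ (v₂ x) (J₂ u') : ℂ)) →
      (fun x => (inner ℂ (v₁ x) (J₁ w) : ℂ)) = (fun x => (inner ℂ (v₂ x) (J₂ w') : ℂ)) →
      (inner ℂ w (J₁ u) : ℂ) = inner ℂ w' (J₂ u')) := by
  have hJ₁ : Function.Injective J₁ :=
    Function.LeftInverse.injective fun k => congrArg (· k) hJ₁sq
  have hJ₂ : Function.Injective J₂ :=
    Function.LeftInverse.injective fun k => congrArg (· k) hJ₂sq
  have hinj₂ := reproducingMap_injective hJ₂ hmin₂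
  have hcomp := reproducingMap_comp_of_isometry hΦ₀iso hΦ₀v
  refine ⟨⟨reproducingMap J₁ v₁, fun _ _ => rfl, reproducingMap_injective hJ₁ hmin₁,
      fun y => funext fun x => (hrep₁ x y).symm⟩,
    ⟨reproducingMap J₂ v₂, fun _ _ => rfl, hinj₂, fun y => funext fun x => (hrep₂ x y).symm⟩,
    hcomp, ?_, fun u w u' w' => inner_eq_of_reproducingMap_eq hΦ₀iso hΦ₀v hinj₂⟩
  change Set.range (reproducingMap J₁ v₁) = Set.range (reproducingMap J₂ v₂)
  rw [← hcomp, hΦ₀bij.surjective.range_comp]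

/-- For a minimal linearisation `(𝓚, J, v)` of a Hermitian kernel `K`, the map
`Φ(k)(x) = ⟨J k, v(x)⟩` (in Mathlib's convention `inner (v x) (J k)`, linear in `k`) is an
injective linear map with `Φ(v(y)) = K(·,y)`, so `(𝓚, J, Φ)` is a reproducing kernel Kreĭn
space with reproducing kernel `K`; moreover, for two unitarily equivalent minimal
linearisations via `Φ₀`, one has `Φ₂ ∘ Φ₀ = Φ₁`, the two spaces of functions coincide, and
the transported indefinite inner products agree. -/
theorem stmt4 {X : Type*} [Nonempty X] (K : X → X → ℂ) (hK : IsHermitianKernel K)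
    {𝓚₁ 𝓚₂ : Type*} [NormedAddCommGroup 𝓚₁] [InnerProductSpace ℂ 𝓚₁] [CompleteSpace 𝓚₁]
    [NormedAddCommGroup 𝓚₂] [InnerProductSpace ℂ 𝓚₂] [CompleteSpace 𝓚₂]
    (J₁ : 𝓚₁ →L[ℂ] 𝓚₁) (J₂ : 𝓚₂ →L[ℂ] 𝓚₂)
    (hJ₁sa : IsSelfAdjoint J₁) (hJ₁sq : J₁ ∘L J₁ = ContinuousLinearMap.id ℂ 𝓚₁)
    (hJ₂sa : IsSelfAdjoint J₂) (hJ₂sq : J₂ ∘L J₂ = ContinuousLinearMap.id ℂ 𝓚₂)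
    (v₁ : X → 𝓚₁) (v₂ : X → 𝓚₂)
    (hrep₁ : ∀ x y, K x y = (inner ℂ (v₁ x) (J₁ (v₁ y)) : ℂ))
    (hrep₂ : ∀ x y, K x y = (inner ℂ (v₂ x) (J₂ (v₂ y)) : ℂ))
    (hmin₁ : Dense (Submodule.span ℂ (Set.range v₁) : Set 𝓚₁))
    (hmin₂ : Dense (Submodule.span ℂ (Set.range v₂) : Set 𝓚₂))
    (Φ₀ : 𝓚₁ →L[ℂ] 𝓚₂) (hΦ₀bij : Function.Bijective Φ₀)
    (hΦ₀iso : ∀ u w : 𝓚₁, (inner ℂ (Φ₀ w) (J₂ (Φ₀ u)) : ℂ) = inner ℂ w (J₁ u))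
    (hΦ₀v : ∀ x, Φ₀ (v₁ x) = v₂ x) :
    -- (a), (b): `Φ₁` is an injective linear map and `Φ₁ (v₁ y) = K(·,y)`,
    -- so `(𝓚₁, J₁, Φ₁)` is a reproducing kernel Kreĭn space with reproducing kernel `K`
    (∃ Φ : 𝓚₁ →ₗ[ℂ] (X → ℂ),
      (∀ k x, Φ k x = (inner ℂ (v₁ x) (J₁ k) : ℂ)) ∧ Function.Injective Φ ∧
      ∀ y, Φ (v₁ y) = fun x => K x y) ∧
    (∃ Φ : 𝓚₂ →ₗ[ℂ] (X → ℂ),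
      (∀ k x, Φ k x = (inner ℂ (v₂ x) (J₂ k) : ℂ)) ∧ Function.Injective Φ ∧
      ∀ y, Φ (v₂ y) = fun x => K x y) ∧
    -- (c): `Φ₂ ∘ Φ₀ = Φ₁`
    ((fun k : 𝓚₁ => fun x => (inner ℂ (v₂ x) (J₂ (Φ₀ k)) : ℂ)) =
      (fun k : 𝓚₁ => fun x => (inner ℂ (v₁ x) (J₁ k) : ℂ))) ∧
    -- same range of functions
    (Set.range (fun k : 𝓚₁ => fun x => (inner ℂ (v₁ x) (J₁ k) : ℂ)) =
      Set.range (fun k : 𝓚₂ => fun x => (inner ℂ (v₂ x) (J₂ k) : ℂ))) ∧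
    -- same transported indefinite inner products
    (∀ (u w : 𝓚₁) (u' w' : 𝓚₂),
      (fun x => (inner ℂ (v₁ x) (J₁ u) : ℂ)) = (fun x => (inner ℂ (v₂ x) (J₂ u') : ℂ)) →
      (fun x => (inner ℂ (v₁ x) (J₁ w) : ℂ)) = (fun x => (inner ℂ (v₂ x) (J₂ w') : ℂ)) →
      (inner ℂ w (J₁ u) : ℂ) = inner ℂ w' (J₂ u')) :=
  stmt4_general K J₁ J₂ hJ₁sq hJ₂sq v₁ v₂ hrep₁ hrep₂ hmin₁ hmin₂ Φ₀ hΦ₀bij hΦ₀iso hΦ₀v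
end

section
/- Let X be a nonempty set, H a complex Hilbert space, 𝓚 a complex Hilbert space with a fundamental symmetry J, and ι : 𝓚 → (X → H) an injective linear map. For x ∈ X let E(x) : 𝓚 → H be the linear map E(x)f = (ι f)(x). Then the following are equivalent: (1) there exists a kernel K : X × X → L(H) such that for every y ∈ X and h ∈ H the function z ↦ K(z,y)h lies in the range of ι, and for every f ∈ 𝓚, x ∈ X and h ∈ H one has ⟨(ι f)(x), h⟩_H = ⟨J f, g⟩_𝓚 whenever ι g = K(·,x)h; (2) E(x) is continuous for every x ∈ X. In that case the kernel K is uniquely determined, namely K(x,y) = E(x) ∘ J ∘ E(y)* for all x, y ∈ X, where E(y)* : H → 𝓚 is the Hilbert space adjoint of E(y). -/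
/-!
If `K` is a reproducing kernel, then for every `h` the functional `f ↦ ⟨(ι f)(x), h⟩` is
`f ↦ ⟨f, J g⟩` with `ι g = K(·,x)h`, so `E(x)` has a formal adjoint `h ↦ J g`; this makes the
graph of `E(x)` closed and the closed graph theorem gives continuity. Conversely, for continuous
`E(x)` the Hilbert space adjoint exists and `K(x,y) = E(x) J E(y)*` reproduces, because `J` is a
selfadjoint involution. Uniqueness: the reproducing property identifies `J g` with `E(y)* h`,
hence `K(x,y)h = (ι g)(x) = E(x) J E(y)* h`.
-/

open ContinuousLinearMap Filter

section

variable {𝕜 X H 𝓚 : Type*} [RCLike 𝕜]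
  [NormedAddCommGroup H] [InnerProductSpace 𝕜 H] [NormedAddCommGroup 𝓚] [InnerProductSpace 𝕜 𝓚]

theorem LinearMap.continuous_of_forall_exists_inner_eq [CompleteSpace H] [CompleteSpace 𝓚]
    (T : 𝓚 →ₗ[𝕜] H) (hT : ∀ h : H, ∃ a : 𝓚, ∀ f, inner 𝕜 h (T f) = inner 𝕜 a f) :
    Continuous T := by
  refine T.continuous_of_seq_closed_graph fun u f v hu hTu => ext_inner_left 𝕜 fun h => ?_
  obtain ⟨a, ha⟩ := hT h
  have hlim : Tendsto (fun n => inner 𝕜 h (T (u n))) atTop (nhds (inner 𝕜 h (T f))) := by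
    simpa only [ha] using tendsto_const_nhds.inner hu
  exact tendsto_nhds_unique (tendsto_const_nhds.inner hTu) hlim

def IsReproducingKernel (J : 𝓚 →L[𝕜] 𝓚) (ι : 𝓚 →ₗ[𝕜] (X → H))
    (K : X → X → (H →L[𝕜] H)) : Prop :=
  (∀ (y : X) (h : H), ∃ g : 𝓚, ι g = fun z => K z y h) ∧
    ∀ (f g : 𝓚) (x : X) (h : H), ι g = (fun z => K z x h) → inner 𝕜 h (ι f x) = inner 𝕜 g (J f)

namespace IsReproducingKernel

variable [CompleteSpace 𝓚] {J : 𝓚 →L[𝕜] 𝓚} {ι : 𝓚 →ₗ[𝕜] (X → H)} {K : X → X → (H →L[𝕜] H)}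

theorem inner_apply_eq (hK : IsReproducingKernel J ι K) (hJ : IsSelfAdjoint J) {g : 𝓚} {x : X}
    {h : H} (hg : ι g = fun z => K z x h) (f : 𝓚) :
    inner 𝕜 h (ι f x) = inner 𝕜 (J g) f :=
  (hK.2 f g x h hg).trans (hJ.isSymmetric g f).symm

theorem continuous_eval [CompleteSpace H] (hK : IsReproducingKernel J ι K)
    (hJ : IsSelfAdjoint J) (x : X) : Continuous fun f : 𝓚 => ι f x :=
  ((LinearMap.proj x).comp ι).continuous_of_forall_exists_inner_eq fun h =>
    let ⟨g, hg⟩ := hK.1 x h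
    ⟨J g, hK.inner_apply_eq hJ hg⟩

variable [CompleteSpace H] {E : X → (𝓚 →L[𝕜] H)}

theorem apply_eq_adjoint (hK : IsReproducingKernel J ι K) (hJ : IsSelfAdjoint J)
    (hE : ∀ z f, E z f = ι f z) {g : 𝓚} {y : X} {h : H} (hg : ι g = fun z => K z y h) :
    J g = adjoint (E y) h :=
  ext_inner_right 𝕜 fun f => by
    rw [adjoint_inner_left, hE, hK.inner_apply_eq hJ hg]

theorem eq_comp_adjoint (hK : IsReproducingKernel J ι K) (hJ : IsSelfAdjoint J)
    (hJJ : Function.Involutive J) (hE : ∀ z f, E z f = ι f z) (x y : X) :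
    K x y = (E x).comp (J.comp (adjoint (E y))) := by
  ext h
  obtain ⟨g, hg⟩ := hK.1 y h
  calc K x y h = E x g := by rw [hE, hg]
    _ = E x (J (J g)) := by rw [hJJ g]
    _ = (E x).comp (J.comp (adjoint (E y))) h := by rw [hK.apply_eq_adjoint hJ hE hg]; rfl

end IsReproducingKernel

theorem isReproducingKernel_comp_adjoint [CompleteSpace H] [CompleteSpace 𝓚]
    {J : 𝓚 →L[𝕜] 𝓚} (hJ : IsSelfAdjoint J) (hJJ : Function.Involutive J)
    {ι : 𝓚 →ₗ[𝕜] (X → H)} (hι : Function.Injective ι) {E : X → (𝓚 →L[𝕜] H)}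
    (hE : ∀ z f, E z f = ι f z) :
    IsReproducingKernel J ι fun x y => (E x).comp (J.comp (adjoint (E y))) := by
  have hιJ : ∀ y h, ι (J (adjoint (E y) h)) = fun z => (E z).comp (J.comp (adjoint (E y))) h :=
    fun y h => funext fun z => (hE z _).symm
  refine ⟨fun y h => ⟨_, hιJ y h⟩, fun f g x h hg => ?_⟩
  obtain rfl : g = J (adjoint (E x) h) := hι (hg.trans (hιJ x h).symm)
  calc inner 𝕜 h (ι f x) = inner 𝕜 (adjoint (E x) h) f := by rw [adjoint_inner_left, hE]
    _ = inner 𝕜 (adjoint (E x) h) (J (J f)) := by rw [hJJ f]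
    _ = inner 𝕜 (J (adjoint (E x) h)) (J f) := (hJ.isSymmetric _ _).symm

end

theorem stmt5_general {X : Type*}
    {H : Type*} [NormedAddCommGroup H] [InnerProductSpace ℂ H] [CompleteSpace H]
    {𝓚 : Type*} [NormedAddCommGroup 𝓚] [InnerProductSpace ℂ 𝓚] [CompleteSpace 𝓚]
    (J : 𝓚 →L[ℂ] 𝓚) (hJsa : IsSelfAdjoint J)
    (hJsq : J ∘L J = ContinuousLinearMap.id ℂ 𝓚)
    (ι : 𝓚 →ₗ[ℂ] (X → H)) (hι : Function.Injective ι) :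
    -- (1) ↔ (2)
    ((∃ K : X → X → (H →L[ℂ] H),
        (∀ (y : X) (h : H), ∃ g : 𝓚, ι g = fun z => K z y h) ∧
        (∀ (f g : 𝓚) (x : X) (h : H), ι g = (fun z => K z x h) →
          (inner ℂ h (ι f x) : ℂ) = inner ℂ g (J f))) ↔
      (∀ x : X, Continuous fun f : 𝓚 => ι f x)) ∧
    -- uniqueness and the formula `K(x,y) = E(x) ∘ J ∘ E(y)*`
    (∀ K : X → X → (H →L[ℂ] H),
      (∀ (y : X) (h : H), ∃ g : 𝓚, ι g = fun z => K z y h) →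
      (∀ (f g : 𝓚) (x : X) (h : H), ι g = (fun z => K z x h) →
        (inner ℂ h (ι f x) : ℂ) = inner ℂ g (J f)) →
      ∀ E : X → (𝓚 →L[ℂ] H), (∀ (z : X) (f : 𝓚), E z f = ι f z) →
        ∀ x y : X, K x y =
          (E x).comp (J.comp (ContinuousLinearMap.adjoint (E y)))) := by
  have hJJ : Function.Involutive J := DFunLike.congr_fun hJsq
  refine ⟨⟨fun ⟨K, hK⟩ => IsReproducingKernel.continuous_eval hK hJsa, fun hcont => ?_⟩,
    fun K hK₁ hK₂ E hE => IsReproducingKernel.eq_comp_adjoint ⟨hK₁, hK₂⟩ hJsa hJJ hE⟩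
  let E : X → (𝓚 →L[ℂ] H) := fun x => ⟨(LinearMap.proj x).comp ι, hcont x⟩
  exact ⟨_, isReproducingKernel_comp_adjoint hJsa hJJ hι (E := E) fun _ _ => rfl⟩

/-- Let `𝓚` (with fundamental symmetry `J`) be a Kreĭn space of `H`-valued
functions on `X`, realised by the injective linear map `ι : 𝓚 → (X → H)`, and let
`E(x) f = (ι f)(x)` be the evaluation maps. Then `𝓚` has a reproducing kernel
(condition (1)) if and only if every `E(x)` is continuous (condition (2)); in that case the
reproducing kernel is uniquely determined by `K(x,y) = E(x) ∘ J ∘ E(y)*`.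
(Inner products `⟨a,b⟩` of the statement, linear in `a`, are rendered as `inner b a` in
Mathlib's convention.) -/
theorem stmt5 {X : Type*} [Nonempty X]
    {H : Type*} [NormedAddCommGroup H] [InnerProductSpace ℂ H] [CompleteSpace H]
    {𝓚 : Type*} [NormedAddCommGroup 𝓚] [InnerProductSpace ℂ 𝓚] [CompleteSpace 𝓚]
    (J : 𝓚 →L[ℂ] 𝓚) (hJsa : IsSelfAdjoint J)
    (hJsq : J ∘L J = ContinuousLinearMap.id ℂ 𝓚)
    (ι : 𝓚 →ₗ[ℂ] (X → H)) (hι : Function.Injective ι) :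
    -- (1) ↔ (2)
    ((∃ K : X → X → (H →L[ℂ] H),
        (∀ (y : X) (h : H), ∃ g : 𝓚, ι g = fun z => K z y h) ∧
        (∀ (f g : 𝓚) (x : X) (h : H), ι g = (fun z => K z x h) →
          (inner ℂ h (ι f x) : ℂ) = inner ℂ g (J f))) ↔
      (∀ x : X, Continuous fun f : 𝓚 => ι f x)) ∧
    -- uniqueness and the formula `K(x,y) = E(x) ∘ J ∘ E(y)*`
    (∀ K : X → X → (H →L[ℂ] H),
      (∀ (y : X) (h : H), ∃ g : 𝓚, ι g = fun z => K z y h) →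
      (∀ (f g : 𝓚) (x : X) (h : H), ι g = (fun z => K z x h) →
        (inner ℂ h (ι f x) : ℂ) = inner ℂ g (J f)) →
      ∀ E : X → (𝓚 →L[ℂ] H), (∀ (z : X) (f : 𝓚), E z f = ι f z) →
        ∀ x y : X, K x y =
          (E x).comp (J.comp (ContinuousLinearMap.adjoint (E y)))) :=
  stmt5_general J hJsa hJsq ι hι
end

section
/- Let X be a nonempty set and H a Hermitian kernel on X with finite negative signature κ₋(H) < ∞. Then any two minimal linearisations (𝓚₁, J₁, v₁) and (𝓚₂, J₂, v₂) of H in which ker(J₁ + I) and ker(J₂ + I) are finite dimensional are unitarily equivalent. -/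
open scoped ComplexOrder

/-- The negative signature `κ₋(K)` of a Hermitian kernel: the supremum, in `ℕ∞`, of the
dimensions of subspaces `N` of finitely supported functions on which `[f,f]_K < 0` for all
nonzero `f ∈ N`. -/
noncomputable def negSig {X : Type*} (K : X → X → ℂ) : ℕ∞ :=
  ⨆ N ∈ {N : Submodule ℂ (X →₀ ℂ) | ∀ f ∈ N, f ≠ 0 → kerIP K f f < 0},
    (Module.rank ℂ N).toENat

/-!
A linearisation `(𝓚, J, v)` makes `T = Finsupp.linearCombination ℂ v` a map with dense range whose
Krein form `⟪T g, J (T f)⟫` is the kernel form `[f, g]_H`, the same for every linearisation.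
Splitting off the component `(z - J z) / 2` in `ker (J + I)` gives
`‖z‖² = Re ⟪z, J z⟫ + 2 ‖(z - J z) / 2‖²`. When `ker (J + I)` is finite dimensional, the last term
is controlled by finitely many functionals `⟪d i, J z⟫`, with `d i` in the range of `T` close to an
orthonormal basis of `ker (J + I)`, up to an error absorbed by `‖z‖²`. At `z = T₂ f` all these
quantities are Krein products, computable in `𝓚₁`; hence `‖T₂ f‖ ≤ C ‖T₁ f‖` and symmetrically, so
`T₁ f ↦ T₂ f` extends to an isomorphism `𝓚₁ ≃L 𝓚₂`, which preserves Krein forms by continuity.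
-/

open scoped InnerProductSpace

structure IsFundamentalSymmetry {E : Type*} [NormedAddCommGroup E] [InnerProductSpace ℂ E]
    [CompleteSpace E] (J : E →L[ℂ] E) : Prop where
  isSelfAdjoint : IsSelfAdjoint J
  comp_self : J ∘L J = ContinuousLinearMap.id ℂ E

abbrev negativeSpace {E : Type*} [NormedAddCommGroup E] [InnerProductSpace ℂ E]
    (J : E →L[ℂ] E) : Submodule ℂ E :=
  LinearMap.ker (J + ContinuousLinearMap.id ℂ E).toLinearMap

namespace IsFundamentalSymmetry

variable {E : Type*} [NormedAddCommGroup E] [InnerProductSpace ℂ E] [CompleteSpace E]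
  {J : E →L[ℂ] E}

lemma apply_apply (hJ : IsFundamentalSymmetry J) (z : E) : J (J z) = z :=
  DFunLike.congr_fun hJ.comp_self z

lemma inner_apply_left (hJ : IsFundamentalSymmetry J) (x y : E) : ⟪J x, y⟫_ℂ = ⟪x, J y⟫_ℂ :=
  hJ.isSelfAdjoint.isSymmetric x y

lemma norm_apply (hJ : IsFundamentalSymmetry J) (z : E) : ‖J z‖ = ‖z‖ := by
  rw [norm_eq_sqrt_re_inner (𝕜 := ℂ), norm_eq_sqrt_re_inner (𝕜 := ℂ), hJ.inner_apply_left,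
    hJ.apply_apply]

lemma inner_eq_neg_inner_apply (hJ : IsFundamentalSymmetry J) {m : E} (hm : m ∈ negativeSpace J)
    (z : E) : ⟪m, z⟫_ℂ = -⟪m, J z⟫_ℂ := by
  have hJm : J m = -m := eq_neg_of_add_eq_zero_left hm
  calc ⟪m, z⟫_ℂ = ⟪m, J (J z)⟫_ℂ := by rw [hJ.apply_apply]
    _ = -⟪m, J z⟫_ℂ := by rw [← hJ.inner_apply_left, hJm, inner_neg_left]

lemma norm_sq_eq_re_inner_add_sum {ι : Type*} [Fintype ι] (hJ : IsFundamentalSymmetry J)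
    (b : OrthonormalBasis ι ℂ (negativeSpace J)) (z : E) :
    ‖z‖ ^ 2 = (⟪z, J z⟫_ℂ).re + 2 * ∑ i, ‖⟪(b i : E), J z⟫_ℂ‖ ^ 2 := by
  set w : E := (2⁻¹ : ℂ) • (z - J z)
  have hw : w ∈ negativeSpace J := by
    simp only [w, LinearMap.mem_ker, ContinuousLinearMap.coe_coe, add_apply,
      ContinuousLinearMap.id_apply, map_smul, map_sub, hJ.apply_apply]
    module
  have hinner (i : ι) : ⟪(b i : E), w⟫_ℂ = -⟪(b i : E), J z⟫_ℂ := by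
    simp only [w, inner_smul_right, inner_sub_right, hJ.inner_eq_neg_inner_apply (b i).2 z]
    ring
  have hsum : ∑ i, ‖⟪(b i : E), J z⟫_ℂ‖ ^ 2 = ‖w‖ ^ 2 :=
    calc ∑ i, ‖⟪(b i : E), J z⟫_ℂ‖ ^ 2
        = ∑ i, ‖⟪b i, (⟨w, hw⟩ : negativeSpace J)⟫_ℂ‖ ^ 2 := by
          simp only [Submodule.coe_inner, hinner, norm_neg]
      _ = ‖w‖ ^ 2 := b.sum_sq_norm_inner_right _
  have hw_norm : ‖w‖ ^ 2 = (‖z‖ ^ 2 - (⟪z, J z⟫_ℂ).re) / 2 := by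
    rw [norm_smul, mul_pow, @norm_sub_sq ℂ, hJ.norm_apply]
    norm_num
    ring
  rw [hsum, hw_norm]
  ring

lemma exists_norm_sq_le_of_dense (hJ : IsFundamentalSymmetry J)
    [FiniteDimensional ℂ (negativeSpace J)] {D : Set E} (hD : Dense D) :
    ∃ (n : ℕ) (d : Fin n → E), (∀ i, d i ∈ D) ∧
      ∀ z, ‖z‖ ^ 2 ≤ 2 * ‖⟪z, J z⟫_ℂ‖ + 8 * ∑ i, ‖⟪d i, J z⟫_ℂ‖ ^ 2 := by
  let b := stdOrthonormalBasis ℂ (negativeSpace J)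
  set n := Module.finrank ℂ (negativeSpace J)
  -- small enough that the approximation errors `2 n ε² ‖z‖²` can be absorbed into `‖z‖²`
  set ε : ℝ := (8 * n + 1)⁻¹
  have hε : 0 < ε := by positivity
  have hεn : 4 * n * ε ^ 2 ≤ 1 / 2 := by
    have hε1 : ε ≤ 1 := inv_le_one_of_one_le₀ (by linarith [n.cast_nonneg (α := ℝ)])
    have h8 : 8 * n * ε ≤ 1 := by
      rw [← div_eq_mul_inv, div_le_one (by positivity)]
      linarith
    nlinarith
  choose d hdD hd using fun i => hD.exists_dist_lt (b i : E) hε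
  refine ⟨n, d, hdD, fun z => ?_⟩
  have hterm (i : Fin n) :
      ‖⟪(b i : E), J z⟫_ℂ‖ ^ 2 ≤ 2 * ‖⟪d i, J z⟫_ℂ‖ ^ 2 + 2 * ε ^ 2 * ‖z‖ ^ 2 := by
    have h : ‖⟪(b i : E), J z⟫_ℂ‖ ≤ ‖⟪d i, J z⟫_ℂ‖ + ε * ‖z‖ :=
      calc ‖⟪(b i : E), J z⟫_ℂ‖ = ‖⟪d i, J z⟫_ℂ + ⟪(b i : E) - d i, J z⟫_ℂ‖ := by
            rw [inner_sub_left, add_sub_cancel]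
        _ ≤ ‖⟪d i, J z⟫_ℂ‖ + ‖(b i : E) - d i‖ * ‖J z‖ :=
            (norm_add_le _ _).trans (add_le_add_right (norm_inner_le_norm _ _) _)
        _ ≤ ‖⟪d i, J z⟫_ℂ‖ + ε * ‖z‖ := by
            rw [hJ.norm_apply, ← dist_eq_norm]
            gcongr
            exact (hd i).le
    nlinarith [sq_nonneg (‖⟪d i, J z⟫_ℂ‖ - ε * ‖z‖), norm_nonneg ⟪(b i : E), J z⟫_ℂ]
  have hsum := Finset.sum_le_sum fun i (_ : i ∈ Finset.univ) => hterm i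
  rw [Finset.sum_add_distrib, ← Finset.mul_sum, Finset.sum_const, Finset.card_univ,
    Fintype.card_fin, nsmul_eq_mul] at hsum
  have hre := Complex.re_le_norm ⟪z, J z⟫_ℂ
  have hz := hJ.norm_sq_eq_re_inner_add_sum b z
  nlinarith [sq_nonneg ‖z‖]

lemma exists_norm_le_mul_norm {V E₁ : Type*} [AddCommGroup V] [Module ℂ V]
    [NormedAddCommGroup E₁] [InnerProductSpace ℂ E₁] (hJ : IsFundamentalSymmetry J)
    [FiniteDimensional ℂ (negativeSpace J)]
    (J₁ : E₁ →L[ℂ] E₁) (T₁ : V →ₗ[ℂ] E₁) (T : V →ₗ[ℂ] E) (hT : DenseRange T)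
    (hTT₁ : ∀ f g, ⟪T g, J (T f)⟫_ℂ = ⟪T₁ g, J₁ (T₁ f)⟫_ℂ) :
    ∃ C, ∀ f, ‖T f‖ ≤ C * ‖T₁ f‖ := by
  obtain ⟨n, d, hdT, hd⟩ := hJ.exists_norm_sq_le_of_dense hT
  choose h hh using hdT
  set A := 2 * ‖J₁‖ + 8 * ∑ i, (‖J₁‖ * ‖T₁ (h i)‖) ^ 2
  refine ⟨√A, fun f => ?_⟩
  have hform (g : V) : ‖⟪T g, J (T f)⟫_ℂ‖ ≤ ‖J₁‖ * ‖T₁ g‖ * ‖T₁ f‖ := by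
    rw [hTT₁]
    calc ‖⟪T₁ g, J₁ (T₁ f)⟫_ℂ‖ ≤ ‖T₁ g‖ * (‖J₁‖ * ‖T₁ f‖) :=
          (norm_inner_le_norm _ _).trans (by gcongr; exact J₁.le_opNorm _)
      _ = ‖J₁‖ * ‖T₁ g‖ * ‖T₁ f‖ := by ring
  have hsq : ‖T f‖ ^ 2 ≤ A * ‖T₁ f‖ ^ 2 :=
    calc ‖T f‖ ^ 2 ≤ 2 * ‖⟪T f, J (T f)⟫_ℂ‖ + 8 * ∑ i, ‖⟪d i, J (T f)⟫_ℂ‖ ^ 2 := hd _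
      _ ≤ 2 * (‖J₁‖ * ‖T₁ f‖ * ‖T₁ f‖) + 8 * ∑ i, (‖J₁‖ * ‖T₁ (h i)‖ * ‖T₁ f‖) ^ 2 := by
          gcongr with i
          · exact hform f
          · rw [← hh i]
            exact hform (h i)
      _ = A * ‖T₁ f‖ ^ 2 := by
          simp only [A, mul_pow _ ‖T₁ f‖, ← Finset.sum_mul]
          ring
  calc ‖T f‖ = √(‖T f‖ ^ 2) := (Real.sqrt_sq (norm_nonneg _)).symm
    _ ≤ √(A * ‖T₁ f‖ ^ 2) := Real.sqrt_le_sqrt hsq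
    _ = √A * ‖T₁ f‖ := by rw [Real.sqrt_mul' _ (sq_nonneg _), Real.sqrt_sq (norm_nonneg _)]

end IsFundamentalSymmetry

lemma Finsupp.denseRange_linearCombination_iff {R M X : Type*} [Semiring R] [AddCommMonoid M]
    [Module R M] [TopologicalSpace M] {v : X → M} :
    DenseRange (Finsupp.linearCombination R v) ↔
      Dense (Submodule.span R (Set.range v) : Set M) := by
  rw [DenseRange, ← LinearMap.coe_range, Finsupp.range_linearCombination]

lemma inner_linearCombination_eq_kerIP {X E : Type*} [NormedAddCommGroup E]
    [InnerProductSpace ℂ E] {K : X → X → ℂ} (J : E →L[ℂ] E) (v : X → E)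
    (hK : ∀ x y, K x y = ⟪v x, J (v y)⟫_ℂ) (f g : X →₀ ℂ) :
    ⟪Finsupp.linearCombination ℂ v g, J (Finsupp.linearCombination ℂ v f)⟫_ℂ = kerIP K f g := by
  rw [Finsupp.linearCombination_apply, Finsupp.linearCombination_apply, Finsupp.sum, Finsupp.sum,
    map_sum, sum_inner]
  refine Finset.sum_congr rfl fun x _ => ?_
  rw [inner_smul_left, inner_sum, Finset.mul_sum]
  refine Finset.sum_congr rfl fun y _ => ?_
  rw [map_smul, inner_smul_right, hK]
  ring

theorem stmt7_general {X : Type*} (H : X → X → ℂ)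
    {𝓚₁ 𝓚₂ : Type*} [NormedAddCommGroup 𝓚₁] [InnerProductSpace ℂ 𝓚₁] [CompleteSpace 𝓚₁]
    [NormedAddCommGroup 𝓚₂] [InnerProductSpace ℂ 𝓚₂] [CompleteSpace 𝓚₂]
    (J₁ : 𝓚₁ →L[ℂ] 𝓚₁) (J₂ : 𝓚₂ →L[ℂ] 𝓚₂)
    (hJ₁sa : IsSelfAdjoint J₁) (hJ₁sq : J₁ ∘L J₁ = ContinuousLinearMap.id ℂ 𝓚₁)
    (hJ₂sa : IsSelfAdjoint J₂) (hJ₂sq : J₂ ∘L J₂ = ContinuousLinearMap.id ℂ 𝓚₂)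
    (v₁ : X → 𝓚₁) (v₂ : X → 𝓚₂)
    (hrep₁ : ∀ x y, H x y = (inner ℂ (v₁ x) (J₁ (v₁ y)) : ℂ))
    (hrep₂ : ∀ x y, H x y = (inner ℂ (v₂ x) (J₂ (v₂ y)) : ℂ))
    (hmin₁ : Dense (Submodule.span ℂ (Set.range v₁) : Set 𝓚₁))
    (hmin₂ : Dense (Submodule.span ℂ (Set.range v₂) : Set 𝓚₂))
    (hfin₁ : FiniteDimensional ℂ (LinearMap.ker (J₁ + ContinuousLinearMap.id ℂ 𝓚₁).toLinearMap))
    (hfin₂ : FiniteDimensional ℂ (LinearMap.ker (J₂ + ContinuousLinearMap.id ℂ 𝓚₂).toLinearMap)) :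
    ∃ Φ : 𝓚₁ →L[ℂ] 𝓚₂, Function.Bijective Φ ∧
      (∀ u w : 𝓚₁, (inner ℂ (Φ w) (J₂ (Φ u)) : ℂ) = inner ℂ w (J₁ u)) ∧
      (∀ x, Φ (v₁ x) = v₂ x) := by
  set T₁ := Finsupp.linearCombination ℂ v₁
  set T₂ := Finsupp.linearCombination ℂ v₂
  have hT : ∀ f g, ⟪T₂ g, J₂ (T₂ f)⟫_ℂ = ⟪T₁ g, J₁ (T₁ f)⟫_ℂ := fun f g => by
    rw [inner_linearCombination_eq_kerIP J₂ v₂ hrep₂, inner_linearCombination_eq_kerIP J₁ v₁ hrep₁]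
  have hJ₁ : IsFundamentalSymmetry J₁ := ⟨hJ₁sa, hJ₁sq⟩
  have hJ₂ : IsFundamentalSymmetry J₂ := ⟨hJ₂sa, hJ₂sq⟩
  have hT₁ : DenseRange T₁ := Finsupp.denseRange_linearCombination_iff.mpr hmin₁
  have hT₂ : DenseRange T₂ := Finsupp.denseRange_linearCombination_iff.mpr hmin₂
  let Φ := (LinearEquiv.refl ℂ (X →₀ ℂ)).extend T₁ T₂
    hT₁ (hJ₂.exists_norm_le_mul_norm J₁ T₁ T₂ hT₂ hT)
    hT₂ (hJ₁.exists_norm_le_mul_norm J₂ T₂ T₁ hT₁ fun f g => (hT f g).symm)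
  have hΦ (f : X →₀ ℂ) : Φ (T₁ f) = T₂ f := LinearEquiv.extend_eq ..
  refine ⟨Φ, Φ.bijective, fun u w => ?_, fun x => by simpa [T₁, T₂] using hΦ (Finsupp.single x 1)⟩
  have hKrein := (hT₁.prodMap hT₁).equalizer
    (g := fun p : 𝓚₁ × 𝓚₁ => ⟪Φ p.2, J₂ (Φ p.1)⟫_ℂ) (h := fun p => ⟪p.2, J₁ p.1⟫_ℂ)
    (by fun_prop) (by fun_prop) (funext fun p => by simp [hΦ, hT])
  exact congrFun hKrein (u, w)

/-- For a Hermitian kernel `H` with finite negative signature, any two minimal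
linearisations `(𝓚₁, J₁, v₁)` and `(𝓚₂, J₂, v₂)` with `ker (J₁ + I)` and `ker (J₂ + I)`
finite dimensional are unitarily equivalent. -/
theorem stmt7 {X : Type*} [Nonempty X] (H : X → X → ℂ) (hH : IsHermitianKernel H)
    (hκ : negSig H < ⊤)
    {𝓚₁ 𝓚₂ : Type*} [NormedAddCommGroup 𝓚₁] [InnerProductSpace ℂ 𝓚₁] [CompleteSpace 𝓚₁]
    [NormedAddCommGroup 𝓚₂] [InnerProductSpace ℂ 𝓚₂] [CompleteSpace 𝓚₂]
    (J₁ : 𝓚₁ →L[ℂ] 𝓚₁) (J₂ : 𝓚₂ →L[ℂ] 𝓚₂)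
    (hJ₁sa : IsSelfAdjoint J₁) (hJ₁sq : J₁ ∘L J₁ = ContinuousLinearMap.id ℂ 𝓚₁)
    (hJ₂sa : IsSelfAdjoint J₂) (hJ₂sq : J₂ ∘L J₂ = ContinuousLinearMap.id ℂ 𝓚₂)
    (v₁ : X → 𝓚₁) (v₂ : X → 𝓚₂)
    (hrep₁ : ∀ x y, H x y = (inner ℂ (v₁ x) (J₁ (v₁ y)) : ℂ))
    (hrep₂ : ∀ x y, H x y = (inner ℂ (v₂ x) (J₂ (v₂ y)) : ℂ))
    (hmin₁ : Dense (Submodule.span ℂ (Set.range v₁) : Set 𝓚₁))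
    (hmin₂ : Dense (Submodule.span ℂ (Set.range v₂) : Set 𝓚₂))
    (hfin₁ : FiniteDimensional ℂ (LinearMap.ker (J₁ + ContinuousLinearMap.id ℂ 𝓚₁).toLinearMap))
    (hfin₂ : FiniteDimensional ℂ (LinearMap.ker (J₂ + ContinuousLinearMap.id ℂ 𝓚₂).toLinearMap)) :
    ∃ Φ : 𝓚₁ →L[ℂ] 𝓚₂, Function.Bijective Φ ∧
      (∀ u w : 𝓚₁, (inner ℂ (Φ w) (J₂ (Φ u)) : ℂ) = inner ℂ w (J₁ u)) ∧
      (∀ x, Φ (v₁ x) = v₂ x) :=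
  stmt7_general H J₁ J₂ hJ₁sa hJ₁sq hJ₂sa hJ₂sq v₁ v₂ hrep₁ hrep₂ hmin₁ hmin₂ hfin₁ hfin₂
end

section
/- Fix a real number p with 1 < p < 2, let E = ℓ^p(ℕ; ℝ) be the real Banach space of p-summable real sequences, let E′ be its continuous dual, and set X = E × E′. Define the real symmetric kernel H on X by H((e,φ),(f,ψ)) = φ(f) + ψ(e). Then H cannot be written as a difference of two positive semidefinite kernels: there do not exist kernels K₁, K₂ : X × X → ℝ, each positive semidefinite, with H = K₁ − K₂. -/
/-!
Write `H = K₁ - K₂` and `q = K₁ + K₂`, viewed as bilinear forms on finitely supported functions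
on `X = E × E′`. Since `H` is symmetric, `H(c, d)² ≤ q(c) q(d)`. Banach–Steinhaus on `X`, applied
to the functionals `x ↦ H(x, d)` with `q(d) ≤ 1`, gives `H(x, d)² ≤ C² ‖x‖² q(d)`. Banach–Steinhaus
on `E`, applied to the functionals `φ` with `H((0, φ), d) ≤ 1` whenever `q(d) ≤ 1`, shows that a
fixed multiple of every `φ` with `‖φ‖ ≥ 1` pairs to at least `1` with some `d`, `q(d) ≤ 1`.

Take for `φᵢ` the coordinate functionals, with partners `dᵢ`, and average over all signs `ε`:
the cross terms cancel, so `H(Σ εᵢ (0, a φᵢ), Σ εᵢ dᵢ)` averages to at least `n`, while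
`q(Σ εᵢ dᵢ)` averages to at most `n` and `‖Σ εᵢ φᵢ‖ ≤ n^(1 - 1/p)` by Hölder.
Cauchy–Schwarz over the signs gives `n ≤ const · n^(2 - 2/p)`, impossible for `p < 2`.
-/

/-- A real kernel `K` on `X` is positive semidefinite if
`∑_{x,y} K(x,y) f(y) f(x) ≥ 0` for every finitely supported `f : X → ℝ`. -/
def IsPSDRealKernel {X : Type*} (K : X → X → ℝ) : Prop :=
  ∀ f : X →₀ ℝ, 0 ≤ ∑ x ∈ f.support, ∑ y ∈ f.support, K x y * f y * f x

section KernelForm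

variable {X : Type*}

noncomputable def kernelForm (K : X → X → ℝ) : (X →₀ ℝ) →ₗ[ℝ] (X →₀ ℝ) →ₗ[ℝ] ℝ :=
  Finsupp.linearCombination ℝ fun x => Finsupp.linearCombination ℝ (K x)

theorem kernelForm_apply (K : X → X → ℝ) (c d : X →₀ ℝ) :
    kernelForm K c d = ∑ x ∈ c.support, ∑ y ∈ d.support, K x y * d y * c x := by
  simp only [kernelForm, Finsupp.linearCombination_apply, Finsupp.sum, LinearMap.sum_apply,
    LinearMap.smul_apply, smul_eq_mul, Finset.mul_sum]
  exact Finset.sum_congr rfl fun x _ => Finset.sum_congr rfl fun y _ => by ring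

theorem IsPSDRealKernel.kernelForm_self_nonneg {K : X → X → ℝ} (hK : IsPSDRealKernel K)
    (f : X →₀ ℝ) : 0 ≤ kernelForm K f f :=
  (kernelForm_apply K f f).symm ▸ hK f

theorem kernelForm_sub (K₁ K₂ : X → X → ℝ) :
    kernelForm (K₁ - K₂) = kernelForm K₁ - kernelForm K₂ := by
  ext x y
  simp [kernelForm]

theorem kernelForm_bilinear {M : Type*} [AddCommGroup M] [Module ℝ M]
    (b : M →ₗ[ℝ] M →ₗ[ℝ] ℝ) :
    kernelForm (fun x y => b x y) =
      b.compl₁₂ (Finsupp.linearCombination ℝ id) (Finsupp.linearCombination ℝ id) := by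
  ext x y
  simp [kernelForm]

end KernelForm

section BilinearForm

variable {V : Type*} [AddCommGroup V] [Module ℝ V]

theorem sq_sub_apply_le (b₁ b₂ : V →ₗ[ℝ] V →ₗ[ℝ] ℝ) (h₁ : ∀ v, 0 ≤ b₁ v v)
    (h₂ : ∀ v, 0 ≤ b₂ v v) {v w : V} (hsymm : (b₁ - b₂) v w = (b₁ - b₂) w v) :
    (b₁ - b₂) v w ^ 2 ≤ (b₁ + b₂) v v * (b₁ + b₂) w w := by
  -- `b₁ (v - t w) (v - t w) + b₂ (v + t w) (v + t w) ≥ 0` is a quadratic in `t`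
  have hquad : ∀ t : ℝ, 0 ≤ (b₁ + b₂) w w * (t * t) + (-2 * (b₁ - b₂) v w) * t
      + (b₁ + b₂) v v := by
    intro t
    have e₁ := h₁ (v - t • w)
    have e₂ := h₂ (v + t • w)
    simp only [LinearMap.add_apply, LinearMap.sub_apply, map_sub, map_add, map_smul,
      LinearMap.smul_apply, smul_eq_mul] at e₁ e₂ hsymm ⊢
    linear_combination e₁ + e₂ + t * hsymm
  have := discrim_le_zero hquad
  rw [discrim] at this
  nlinarith

theorem sq_le_sq_mul_of_forall_le (q : V →ₗ[ℝ] V →ₗ[ℝ] ℝ) (hq : ∀ v, 0 ≤ q v v)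
    (ℓ : V →ₗ[ℝ] ℝ) {M : ℝ} (hℓ : ∀ v, q v v ≤ 1 → ℓ v ≤ M) (v : V) :
    ℓ v ^ 2 ≤ M ^ 2 * q v v := by
  have hscale : ∀ t : ℝ, q (t • v) (t • v) = t ^ 2 * q v v := fun t => by
    simp only [map_smul, LinearMap.smul_apply, smul_eq_mul]; ring
  rcases (hq v).eq_or_lt with h0 | hpos
  · have hline : ∀ t : ℝ, t * ℓ v ≤ M := fun t => by
      simpa [hscale, ← h0] using hℓ (t • v)
    have : ℓ v = 0 := by
      by_contra hne
      have := hline ((M + 1) / ℓ v)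
      rw [div_mul_cancel₀ _ hne] at this
      linarith
    simp [this, ← h0]
  · set s := √(q v v)
    have hs : 0 < s := Real.sqrt_pos.mpr hpos
    have hbound : ∀ σ : ℝ, σ ^ 2 = 1 → σ * ℓ v ≤ M * s := fun σ hσ => by
      have h := hℓ ((σ / s) • v) <| by
        rw [hscale, div_pow, hσ, Real.sq_sqrt (hq v), one_div_mul_cancel hpos.ne']
      rwa [map_smul, smul_eq_mul, div_mul_eq_mul_div, div_le_iff₀ hs] at h
    calc ℓ v ^ 2 ≤ (M * s) ^ 2 :=
          sq_le_sq' (by linarith [hbound (-1) (by norm_num)]) (by simpa using hbound 1 (one_pow 2))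
      _ = M ^ 2 * q v v := by rw [mul_pow, Real.sq_sqrt (hq v)]

theorem sq_apply_linearCombination_le_of_eq_sub {M : Type*} [AddCommGroup M] [Module ℝ M]
    (b : M →ₗ[ℝ] M →ₗ[ℝ] ℝ) (hb : ∀ x y, b x y = b y x) {K₁ K₂ : M → M → ℝ}
    (hK₁ : IsPSDRealKernel K₁) (hK₂ : IsPSDRealKernel K₂) (hH : ∀ x y, b x y = K₁ x y - K₂ x y)
    (c d : M →₀ ℝ) :
    b (Finsupp.linearCombination ℝ id c) (Finsupp.linearCombination ℝ id d) ^ 2 ≤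
      (kernelForm K₁ + kernelForm K₂) c c * (kernelForm K₁ + kernelForm K₂) d d := by
  have hform : kernelForm K₁ - kernelForm K₂ =
      b.compl₁₂ (Finsupp.linearCombination ℝ id) (Finsupp.linearCombination ℝ id) := by
    rw [← kernelForm_sub, ← kernelForm_bilinear]
    exact congrArg kernelForm (funext₂ fun x y => (hH x y).symm)
  have := sq_sub_apply_le (kernelForm K₁) (kernelForm K₂) hK₁.kernelForm_self_nonneg
    hK₂.kernelForm_self_nonneg (v := c) (w := d) (by simp [hform, hb])
  simpa [hform] using this

variable {M : Type*} [NormedAddCommGroup M] [NormedSpace ℝ M] [CompleteSpace M]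

theorem exists_sq_apply_le_sq_norm_mul (h : M →L[ℝ] M →L[ℝ] ℝ) (π : V →ₗ[ℝ] M)
    (hπ : Function.Surjective π) (q : V →ₗ[ℝ] V →ₗ[ℝ] ℝ) (hq : ∀ v, 0 ≤ q v v)
    (hCS : ∀ c d, h (π c) (π d) ^ 2 ≤ q c c * q d d) :
    ∃ C, ∀ x d, h x (π d) ^ 2 ≤ (C * ‖x‖) ^ 2 * q d d := by
  have hpointwise : ∀ x, ∃ C, ∀ d : {d : V // q d d ≤ 1}, ‖h.flip (π d) x‖ ≤ C := by
    intro x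
    obtain ⟨c, rfl⟩ := hπ x
    refine ⟨√(q c c), fun d => Real.abs_le_sqrt ?_⟩
    calc h (π c) (π d) ^ 2 ≤ q c c * q d d := hCS c d
      _ ≤ q c c * 1 := mul_le_mul_of_nonneg_left d.2 (hq c)
      _ = q c c := mul_one _
  obtain ⟨C, hC⟩ := banach_steinhaus hpointwise
  refine ⟨C, fun x => sq_le_sq_mul_of_forall_le q hq ((h x).toLinearMap ∘ₗ π) fun d hd => ?_⟩
  calc h x (π d) ≤ ‖h.flip (π d) x‖ := le_abs_self _
    _ ≤ ‖h.flip (π d)‖ * ‖x‖ := (h.flip (π d)).le_opNorm x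
    _ ≤ C * ‖x‖ := mul_le_mul_of_nonneg_right (hC ⟨d, hd⟩) (norm_nonneg x)

end BilinearForm

section Rademacher

def boolSign (b : Bool) : ℝ := if b then 1 else -1

theorem abs_boolSign (b : Bool) : |boolSign b| = 1 := by
  cases b <;> norm_num [boolSign]

theorem boolSign_mul_self (b : Bool) : boolSign b * boolSign b = 1 := by
  cases b <;> norm_num [boolSign]

theorem boolSign_not (b : Bool) : boolSign (!b) = -boolSign b := by
  cases b <;> simp [boolSign]

theorem sum_boolSign_mul_boolSign {n : ℕ} (i j : Fin n) :
    ∑ ε : Fin n → Bool, boolSign (ε i) * boolSign (ε j) = if i = j then 2 ^ n else 0 := by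
  split_ifs with hij
  · simp [hij, boolSign_mul_self]
  · set τ : (Fin n → Bool) → Fin n → Bool := fun ε => Function.update ε i (!ε i)
    have hτ : Function.Involutive τ := fun ε => by simp [τ]
    have hflip : ∀ ε, boolSign (τ ε i) * boolSign (τ ε j) = -(boolSign (ε i) * boolSign (ε j)) :=
      fun ε => by
        simp only [τ, Function.update_self, Function.update_of_ne (Ne.symm hij), boolSign_not,
          neg_mul]
    have := Equiv.sum_comp hτ.toPerm fun ε => boolSign (ε i) * boolSign (ε j)
    simp only [Function.Involutive.coe_toPerm, hflip, Finset.sum_neg_distrib] at this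
    linarith

variable {M N : Type*} [AddCommGroup N] [Module ℝ N]

theorem apply_sum_smul_sum_smul [AddCommGroup M] [Module ℝ M] (P : M →ₗ[ℝ] N →ₗ[ℝ] ℝ) {n : ℕ}
    (s : Fin n → ℝ) (v : Fin n → M) (w : Fin n → N) :
    P (∑ i, s i • v i) (∑ j, s j • w j) = ∑ i, ∑ j, s i * s j * P (v i) (w j) := by
  simp only [map_sum, map_smul, LinearMap.sum_apply, LinearMap.smul_apply, smul_eq_mul,
    Finset.mul_sum]
  rw [Finset.sum_comm]
  exact Finset.sum_congr rfl fun i _ => Finset.sum_congr rfl fun j _ => by ring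

theorem sum_apply_sum_boolSign_smul [AddCommGroup M] [Module ℝ M] (P : M →ₗ[ℝ] N →ₗ[ℝ] ℝ)
    {n : ℕ} (v : Fin n → M) (w : Fin n → N) :
    ∑ ε : Fin n → Bool, P (∑ i, boolSign (ε i) • v i) (∑ j, boolSign (ε j) • w j) =
      2 ^ n * ∑ i, P (v i) (w i) := by
  simp_rw [apply_sum_smul_sum_smul]
  rw [Finset.sum_comm]
  simp_rw [Finset.sum_comm (s := Finset.univ (α := Fin n → Bool)), ← Finset.sum_mul,
    sum_boolSign_mul_boolSign]
  simp [ite_mul, Finset.mul_sum]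

theorem natCast_le_sq_of_sq_apply_le [SeminormedAddCommGroup M] [Module ℝ M]
    (P : M →ₗ[ℝ] N →ₗ[ℝ] ℝ) (q : N →ₗ[ℝ] N →ₗ[ℝ] ℝ) (hq : ∀ d, 0 ≤ q d d) {C R : ℝ}
    (hP : ∀ x d, P x d ^ 2 ≤ (C * ‖x‖) ^ 2 * q d d) {n : ℕ} (v : Fin n → M) (w : Fin n → N)
    (hw : ∀ i, q (w i) (w i) ≤ 1) (hvw : ∀ i, 1 ≤ P (v i) (w i))
    (hv : ∀ ε : Fin n → Bool, ‖∑ i, boolSign (ε i) • v i‖ ≤ R) :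
    (n : ℝ) ≤ (C * R) ^ 2 := by
  set x : (Fin n → Bool) → M := fun ε => ∑ i, boolSign (ε i) • v i
  set d : (Fin n → Bool) → N := fun ε => ∑ i, boolSign (ε i) • w i
  have hcard : ∑ _ε : Fin n → Bool, (1 : ℝ) = 2 ^ n := by simp
  have hlower : 2 ^ n * n ≤ ∑ ε, P (x ε) (d ε) := by
    rw [sum_apply_sum_boolSign_smul]
    gcongr
    simpa using Finset.sum_le_sum fun i (_ : i ∈ Finset.univ) => hvw i
  have hx : ∑ ε, (C * ‖x ε‖) ^ 2 ≤ 2 ^ n * (C * R) ^ 2 := by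
    rw [← hcard, Finset.sum_mul]
    gcongr with ε
    rw [one_mul, mul_pow, mul_pow]
    gcongr
    exact hv ε
  have hd : ∑ ε, q (d ε) (d ε) ≤ 2 ^ n * n := by
    rw [sum_apply_sum_boolSign_smul]
    gcongr
    simpa using Finset.sum_le_sum fun i (_ : i ∈ Finset.univ) => hw i
  have hsq : (2 ^ n * n) ^ 2 ≤ (2 ^ n * (C * R) ^ 2) * (2 ^ n * n) :=
    calc ((2 : ℝ) ^ n * n) ^ 2 ≤ (∑ ε, P (x ε) (d ε)) ^ 2 := by gcongr
      _ ≤ (∑ ε, (C * ‖x ε‖) ^ 2) * ∑ ε, q (d ε) (d ε) :=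
        Finset.sum_sq_le_sum_mul_sum_of_sq_le_mul Finset.univ
          (fun ε _ => sq_nonneg (C * ‖x ε‖)) (fun ε _ => hq (d ε)) fun ε _ => hP (x ε) (d ε)
      _ ≤ (2 ^ n * (C * R) ^ 2) * (2 ^ n * n) :=
        mul_le_mul hx hd (Finset.sum_nonneg fun ε _ => hq (d ε)) (by positivity)
  rcases n.eq_zero_or_pos with rfl | hn
  · simpa using sq_nonneg (C * R)
  · have hpos : (0 : ℝ) < 2 ^ n * 2 ^ n * n := by positivity
    refine le_of_mul_le_mul_left ?_ hpos
    linear_combination hsq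

end Rademacher

section Schwartz

variable (E : Type*) [NormedAddCommGroup E] [NormedSpace ℝ E]

noncomputable def schwartzForm : (E × StrongDual ℝ E) →L[ℝ] (E × StrongDual ℝ E) →L[ℝ] ℝ :=
  let pairing := (ContinuousLinearMap.id ℝ (StrongDual ℝ E)).bilinearComp
    (.snd ℝ E (StrongDual ℝ E)) (.fst ℝ E (StrongDual ℝ E))
  pairing + pairing.flip

variable {E}

@[simp]
theorem schwartzForm_apply (x y : E × StrongDual ℝ E) :
    schwartzForm E x y = x.2 y.1 + y.2 x.1 :=
  rfl

variable [CompleteSpace E]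

theorem exists_one_le_schwartzForm_smul {V : Type*} [AddCommGroup V] [Module ℝ V]
    (π : V →ₗ[ℝ] E × StrongDual ℝ E) (hπ : Function.Surjective π) (q : V →ₗ[ℝ] V →ₗ[ℝ] ℝ)
    (hq : ∀ v, 0 ≤ q v v) :
    ∃ a : ℝ, ∀ φ : StrongDual ℝ E, 1 ≤ ‖φ‖ →
      ∃ d, q d d ≤ 1 ∧ 1 ≤ schwartzForm E (0, a • φ) (π d) := by
  have hpointwise : ∀ g : E, ∃ C, ∀ φ : {φ : StrongDual ℝ E //
      ∀ d, q d d ≤ 1 → schwartzForm E (0, φ) (π d) ≤ 1}, ‖(φ : StrongDual ℝ E) g‖ ≤ C := by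
    intro g
    obtain ⟨c, hc⟩ := hπ (g, 0)
    refine ⟨√(q c c), fun φ => Real.abs_le_sqrt ?_⟩
    simpa [hc] using
      sq_le_sq_mul_of_forall_le q hq ((schwartzForm E (0, φ)).toLinearMap ∘ₗ π) φ.2 c
  obtain ⟨C, hC⟩ := banach_steinhaus hpointwise
  refine ⟨|C| + 1, fun φ hφ => ?_⟩
  by_contra! h
  have hbound : (|C| + 1) * ‖φ‖ ≤ C := by
    simpa [norm_smul, abs_of_pos (by positivity : 0 < |C| + 1)] using
      hC ⟨(|C| + 1) • φ, fun d hd => (h d hd).le⟩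
  have := le_mul_of_one_le_right (by positivity : (0 : ℝ) ≤ |C| + 1) hφ
  linarith [le_abs_self C]

theorem exists_natCast_le_mul_sq_of_eq_sub {K₁ K₂ : E × StrongDual ℝ E → E × StrongDual ℝ E → ℝ}
    (hK₁ : IsPSDRealKernel K₁) (hK₂ : IsPSDRealKernel K₂)
    (hH : ∀ x y : E × StrongDual ℝ E, x.2 y.1 + y.2 x.1 = K₁ x y - K₂ x y) :
    ∃ A, ∀ (n : ℕ) (φ : Fin n → StrongDual ℝ E) (R : ℝ), (∀ i, 1 ≤ ‖φ i‖) →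
      (∀ ε : Fin n → Bool, ‖∑ i, boolSign (ε i) • φ i‖ ≤ R) → (n : ℝ) ≤ A * R ^ 2 := by
  set π := Finsupp.linearCombination ℝ (id : E × StrongDual ℝ E → E × StrongDual ℝ E)
  have hπ : Function.Surjective π := fun x => ⟨Finsupp.single x 1, by simp [π]⟩
  set q := kernelForm K₁ + kernelForm K₂
  have hq : ∀ d, 0 ≤ q d d := fun d =>
    add_nonneg (hK₁.kernelForm_self_nonneg d) (hK₂.kernelForm_self_nonneg d)
  obtain ⟨C, hC⟩ := exists_sq_apply_le_sq_norm_mul (schwartzForm E) π hπ q hq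
    (sq_apply_linearCombination_le_of_eq_sub (schwartzForm E).toLinearMap₁₂
      (fun _ _ => add_comm _ _) hK₁ hK₂ hH)
  obtain ⟨a, ha⟩ := exists_one_le_schwartzForm_smul π hπ q hq
  refine ⟨(C * a) ^ 2, fun n φ R hφ hR => ?_⟩
  choose w hw hvw using fun i => ha (φ i) (hφ i)
  have hsum : ∀ ε : Fin n → Bool, ∑ i, boolSign (ε i) • ((0 : E), a • φ i) =
      (0, a • ∑ i, boolSign (ε i) • φ i) := fun ε => by
    ext
    · simp [Prod.fst_sum]
    · simp only [Prod.snd_sum, Prod.smul_snd, Finset.smul_sum, smul_smul, mul_comm]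
  calc (n : ℝ) ≤ (C * (|a| * R)) ^ 2 :=
        natCast_le_sq_of_sq_apply_le ((schwartzForm E).toLinearMap₁₂.compl₂ π) q hq hC
          (fun i => ((0 : E), a • φ i)) w hw hvw fun ε => by
            rw [hsum, Prod.norm_mk, norm_zero, max_eq_right (norm_nonneg _), norm_smul,
              Real.norm_eq_abs]
            exact mul_le_mul_of_nonneg_left (hR ε) (abs_nonneg a)
    _ = (C * a) ^ 2 * R ^ 2 := by rw [mul_pow, mul_pow, sq_abs]; ring

end Schwartz

section LpCoordinates

theorem one_le_norm_evalCLM {α : Type*} {p : ENNReal} [Fact (1 ≤ p)] (i : α) :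
    1 ≤ ‖lp.evalCLM ℝ (fun _ : α => ℝ) p i‖ := by
  classical
  have hp : 0 < p := zero_lt_one.trans_le Fact.out
  have heval : lp.evalCLM ℝ (fun _ : α => ℝ) p i (lp.single p i 1) = 1 :=
    lp.single_apply_self p i 1
  simpa [heval, lp.norm_single hp] using
    (lp.evalCLM ℝ (fun _ : α => ℝ) p i).le_opNorm (lp.single p i 1)

theorem norm_sum_smul_evalCLM_le (p : ℝ) [Fact (1 ≤ ENNReal.ofReal p)] {n : ℕ} (r : Fin n → ℝ)
    (hr : ∀ i, |r i| ≤ 1) :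
    ‖∑ i, r i • lp.evalCLM ℝ (fun _ : ℕ => ℝ) (ENNReal.ofReal p) (i : ℕ)‖ ≤
      (n : ℝ) ^ (1 - 1 / p) := by
  have hp : 1 ≤ p := ENNReal.one_le_ofReal.mp Fact.out
  have hp0 : 0 < p := by linarith
  have htr : (ENNReal.ofReal p).toReal = p := ENNReal.toReal_ofReal hp0.le
  refine ContinuousLinearMap.opNorm_le_bound _ (by positivity) fun f => ?_
  have hsum : ∑ j ∈ Finset.range n, |f j| ^ p ≤ ‖f‖ ^ p := by
    simpa [htr] using lp.sum_rpow_le_norm_rpow (by rwa [htr]) f (Finset.range n)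
  have hHolder : (∑ j ∈ Finset.range n, |f j|) ^ p ≤ ((n : ℝ) ^ (1 - 1 / p) * ‖f‖) ^ p :=
    calc (∑ j ∈ Finset.range n, |f j|) ^ p
        ≤ (n : ℝ) ^ (p - 1) * ∑ j ∈ Finset.range n, |f j| ^ p := by
          simpa using Real.rpow_sum_le_const_mul_sum_rpow (Finset.range n) (fun j => f j) hp
      _ ≤ (n : ℝ) ^ (p - 1) * ‖f‖ ^ p := by gcongr
      _ = ((n : ℝ) ^ (1 - 1 / p) * ‖f‖) ^ p := by
          rw [Real.mul_rpow (by positivity) (norm_nonneg f), ← Real.rpow_mul (Nat.cast_nonneg n)]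
          congr 2
          field_simp
  calc ‖(∑ i, r i • lp.evalCLM ℝ (fun _ : ℕ => ℝ) (ENNReal.ofReal p) (i : ℕ)) f‖
      ≤ ∑ i : Fin n, |f i| := by
        rw [sum_apply]
        refine (norm_sum_le _ _).trans (Finset.sum_le_sum fun i _ => ?_)
        rw [smul_apply, norm_smul, Real.norm_eq_abs, Real.norm_eq_abs]
        exact mul_le_of_le_one_left (abs_nonneg _) (hr i)
    _ = ∑ j ∈ Finset.range n, |f j| := Fin.sum_univ_eq_sum_range (fun j => |f j|) n
    _ ≤ (n : ℝ) ^ (1 - 1 / p) * ‖f‖ :=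
        (Real.rpow_le_rpow_iff (by positivity) (by positivity) hp0).mp hHolder

end LpCoordinates

theorem exists_nat_mul_rpow_lt (A : ℝ) {r : ℝ} (hr : r < 1) : ∃ n : ℕ, A * (n : ℝ) ^ r < n := by
  have hgrowth : Filter.Tendsto (fun n : ℕ => (n : ℝ) ^ (1 - r)) Filter.atTop Filter.atTop :=
    (tendsto_rpow_atTop (by linarith)).comp tendsto_natCast_atTop_atTop
  obtain ⟨n, hAn, hn⟩ :=
    ((hgrowth.eventually_gt_atTop A).and (Filter.eventually_ge_atTop 1)).exists
  have hn : (0 : ℝ) < n := by exact_mod_cast hn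
  refine ⟨n, ?_⟩
  calc A * (n : ℝ) ^ r < (n : ℝ) ^ (1 - r) * (n : ℝ) ^ r := by gcongr
    _ = n := by rw [← Real.rpow_add hn, sub_add_cancel, Real.rpow_one]

theorem stmt19_general (p : ℝ) (hp2 : p < 2)
    [Fact (1 ≤ ENNReal.ofReal p)] :
    ¬ ∃ K₁ K₂ :
        (lp (fun _ : ℕ => ℝ) (ENNReal.ofReal p) ×
          StrongDual ℝ (lp (fun _ : ℕ => ℝ) (ENNReal.ofReal p))) →
        (lp (fun _ : ℕ => ℝ) (ENNReal.ofReal p) ×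
          StrongDual ℝ (lp (fun _ : ℕ => ℝ) (ENNReal.ofReal p))) → ℝ,
      IsPSDRealKernel K₁ ∧ IsPSDRealKernel K₂ ∧
      ∀ x y : lp (fun _ : ℕ => ℝ) (ENNReal.ofReal p) ×
          StrongDual ℝ (lp (fun _ : ℕ => ℝ) (ENNReal.ofReal p)),
        x.2 y.1 + y.2 x.1 = K₁ x y - K₂ x y := by
  rintro ⟨K₁, K₂, hK₁, hK₂, hH⟩
  obtain ⟨A, hA⟩ := exists_natCast_le_mul_sq_of_eq_sub hK₁ hK₂ hH
  have hp : 1 ≤ p := ENNReal.one_le_ofReal.mp Fact.out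
  have hr : 2 - 2 / p < 1 := by
    have : 1 < 2 / p := by rw [lt_div_iff₀ (by linarith)]; linarith
    linarith
  obtain ⟨n, hn⟩ := exists_nat_mul_rpow_lt A hr
  refine hn.not_ge ?_
  calc (n : ℝ) ≤ A * ((n : ℝ) ^ (1 - 1 / p)) ^ 2 :=
        hA n (fun i => lp.evalCLM ℝ _ _ (i : ℕ)) _ (fun i => one_le_norm_evalCLM _)
          fun ε => norm_sum_smul_evalCLM_le p _ fun i => (abs_boolSign _).le
    _ = A * (n : ℝ) ^ (2 - 2 / p) := by
        rw [← Real.rpow_natCast, ← Real.rpow_mul (Nat.cast_nonneg n)]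
        congr 2
        push_cast
        ring

/-- Schwartz's counterexample: For `1 < p < 2`, `E = ℓ^p(ℕ; ℝ)` and `E′` its
continuous dual, the symmetric kernel `H((e,φ),(f,ψ)) = φ(f) + ψ(e)` on `X = E × E′` cannot
be written as a difference of two positive semidefinite kernels. -/
theorem stmt19 (p : ℝ) (hp1 : 1 < p) (hp2 : p < 2)
    [Fact (1 ≤ ENNReal.ofReal p)] :
    ¬ ∃ K₁ K₂ :
        (lp (fun _ : ℕ => ℝ) (ENNReal.ofReal p) ×
          StrongDual ℝ (lp (fun _ : ℕ => ℝ) (ENNReal.ofReal p))) →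
        (lp (fun _ : ℕ => ℝ) (ENNReal.ofReal p) ×
          StrongDual ℝ (lp (fun _ : ℕ => ℝ) (ENNReal.ofReal p))) → ℝ,
      IsPSDRealKernel K₁ ∧ IsPSDRealKernel K₂ ∧
      ∀ x y : lp (fun _ : ℕ => ℝ) (ENNReal.ofReal p) ×
          StrongDual ℝ (lp (fun _ : ℕ => ℝ) (ENNReal.ofReal p)),
        x.2 y.1 + y.2 x.1 = K₁ x y - K₂ x y :=
  stmt19_general p hp2
end
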